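/- arXiv:1407.7978 — 3 statements merged into one kernel-verified Lean document; each statement's English description precedes it below -/
import Mathlib

section
/- Let k ≥ 1 be an integer and let u(x,y) ∈ C^{2k}(closure of ℝ^{n+1}_+), where ℝ^{n+1}_+ = ℝ^n × (0,∞). Define v(x,t) = u(x, t²/4) for (x,t) ∈ ℝ^n × [0,∞). Then v ∈ C^{2k}(closure of ℝ^{n+1}_+) and all odd-order t-derivatives of v vanish on {t = 0}: ∂^{2l−1} v(x,t)/∂t^{2l−1} |_{t=0} = 0 for every l = 1, 2, …, k and every x ∈ ℝ^n. -/
open MeasureTheory Metric Filter Function Topology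

lemma aux_within_eq {N : ℕ} {f : ℝ → ℝ} (hf : ContDiff ℝ N f) {m : ℕ} (hm : m ≤ N) {x : ℝ}
    (hx : x ∈ Set.Ici (0:ℝ)) :
    iteratedDerivWithin m f (Set.Ici 0) x = iteratedDeriv m f x := by
  have h := (contDiff_iff_ftaylorSeries.mp hf)
  have h' : HasFTaylorSeriesUpToOn N f (ftaylorSeries ℝ f) (Set.Ici 0) :=
    (hasFTaylorSeriesUpToOn_univ_iff.mpr h).mono (Set.subset_univ _)
  have := h'.eq_iteratedFDerivWithin_of_uniqueDiffOn (m := m) (by exact_mod_cast hm)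
    (uniqueDiffOn_Ici 0) hx
  rw [iteratedDerivWithin_eq_iteratedFDerivWithin, ← this]
  rw [iteratedDeriv_eq_iteratedFDeriv, ← h.eq_iteratedFDeriv (by exact_mod_cast hm) x]

theorem stmt_4 (n k : ℕ) (hk : 1 ≤ k)
    (u : EuclideanSpace ℝ (Fin n) × ℝ → ℝ)
    (hreg : ContDiffOn ℝ (2 * k) u {z : EuclideanSpace ℝ (Fin n) × ℝ | 0 ≤ z.2}) :
    ContDiffOn ℝ (2 * k)
        (fun z : EuclideanSpace ℝ (Fin n) × ℝ => u (z.1, z.2 ^ 2 / 4))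
        {z : EuclideanSpace ℝ (Fin n) × ℝ | 0 ≤ z.2} ∧
      ∀ l : ℕ, 1 ≤ l → l ≤ k → ∀ x : EuclideanSpace ℝ (Fin n),
        iteratedDerivWithin (2 * l - 1) (fun t : ℝ => u (x, t ^ 2 / 4)) (Set.Ici 0) 0 = 0 := by
  have hg : ContDiff ℝ (2 * k) (fun z : EuclideanSpace ℝ (Fin n) × ℝ => (z.1, z.2 ^ 2 / 4)) := by
    exact contDiff_fst.prodMk ((contDiff_snd.pow 2).div_const 4)
  constructor
  · exact hreg.comp hg.contDiffOn (fun z _ => by simp only [Set.mem_setOf_eq]; positivity)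
  · intro l hl hlk x
    set f : ℝ → ℝ := fun t => u (x, t ^ 2 / 4) with hf
    have hfc : ContDiff ℝ (2 * k) f := by
      rw [← contDiffOn_univ]
      exact hreg.comp (contDiff_const.prodMk ((contDiff_id.pow 2).div_const 4)).contDiffOn
        (fun t _ => by simp only [Set.mem_setOf_eq]; positivity)
    have hm : 2 * l - 1 ≤ 2 * k := by omega
    rw [aux_within_eq hfc hm Set.self_mem_Ici]
    have heven : (fun t : ℝ => f (-t)) = f := by
      funext t; simp [hf]
    have := iteratedDeriv_comp_neg (2 * l - 1) f 0
    rw [heven, neg_zero] at this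
    have hodd : (-1 : ℝ) ^ (2 * l - 1) = -1 := by
      rw [Odd.neg_one_pow]; exact ⟨l - 1, by omega⟩
    rw [hodd] at this
    simp only [smul_eq_mul, neg_one_mul] at this
    linarith
end

section
/- Let l > 0. Suppose a C² function f on a neighborhood of infinity in ℝ^{n+1} has the harmonic asymptotic expansion at infinity with leading coefficient a₀ > 0. Then there exist λ₀ > 0 and R > 0 such that for every λ ≥ λ₀: f(x) > f(x^λ) for all x with x₁ < λ and x ∉ B_R(0), where x^λ = (2λ − x₁, x₂, …, x_{n+1}) is the reflection of x across the hyperplane {x₁ = λ}. -/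
open MeasureTheory Metric Filter Function Topology

/-- First-order partial derivative in the `i`-th coordinate direction. -/
noncomputable def pderiv' {m : ℕ} (i : Fin m) (f : EuclideanSpace ℝ (Fin m) → ℝ)
    (x : EuclideanSpace ℝ (Fin m)) : ℝ :=
  fderiv ℝ f x (EuclideanSpace.single i 1)

/-- The degenerate elliptic operator `Δ̃_{n+1,a} u = Σ ∂²u/∂x_i² + ((2a−1)/x_{n+1}) ∂u/∂x_{n+1}`;
on the hyperplane `{x_{n+1} = 0}` it is interpreted by its continuous extension, which (for
functions even in `x_{n+1}`) equals `Σ ∂²u/∂x_i² + (2a−1) ∂²u/∂x_{n+1}²`. -/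
noncomputable def deltaTilde (n : ℕ) (a : ℝ)
    (f : EuclideanSpace ℝ (Fin (n + 1)) → ℝ) (x : EuclideanSpace ℝ (Fin (n + 1))) : ℝ :=
  (∑ i, pderiv' i (pderiv' i f) x) +
    (if x (Fin.last n) = 0 then (2 * a - 1) * pderiv' (Fin.last n) (pderiv' (Fin.last n) f) x
     else ((2 * a - 1) / x (Fin.last n)) * pderiv' (Fin.last n) f x)

/-- `(−Δ̃_{n+1,a})^k`. -/
noncomputable def negDeltaIter (n : ℕ) (a : ℝ) (k : ℕ)
    (f : EuclideanSpace ℝ (Fin (n + 1)) → ℝ) : EuclideanSpace ℝ (Fin (n + 1)) → ℝ :=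
  (fun g x => -deltaTilde n a g x)^[k] f

/-- Evenness with respect to the last coordinate `x_{n+1}`. -/
def EvenLast (n : ℕ) (f : EuclideanSpace ℝ (Fin (n + 1)) → ℝ) : Prop :=
  ∀ x : EuclideanSpace ℝ (Fin (n + 1)),
    f (WithLp.toLp 2 (Function.update x (Fin.last n) (-x (Fin.last n)))) = f x

/-- The weighted functions `v_i = |x_{n+1}|^{2a−1} (−Δ̃_{n+1,a})^i u` for `i < p`, and
`v_p = |x_{n+1}|^{2a−1} |x|^{−τ} u^α`. -/
noncomputable def vFun (n p : ℕ) (a τ α : ℝ) (u : EuclideanSpace ℝ (Fin (n + 1)) → ℝ)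
    (i : ℕ) (x : EuclideanSpace ℝ (Fin (n + 1))) : ℝ :=
  if i < p then |x (Fin.last n)| ^ (2 * a - 1) * negDeltaIter n a i u x
  else |x (Fin.last n)| ^ (2 * a - 1) * (‖x‖ ^ (-τ) * u x ^ α)

/-- `f` has a harmonic asymptotic expansion at infinity with exponent `l`, leading coefficient
`a₀` and first-order coefficients `aa`: in a neighborhood of infinity,
`f(x) = |x|^{−l}(a₀ + Σ aᵢ xᵢ/|x|²) + O(|x|^{−l−2})`,
`∂ᵢf(x) = −l a₀ xᵢ |x|^{−l−2} + O(|x|^{−l−2})` and `∂ᵢ∂ⱼ f(x) = O(|x|^{−l−2})`. -/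
def HarmonicExpansion (n : ℕ) (l : ℝ) (f : EuclideanSpace ℝ (Fin (n + 1)) → ℝ)
    (a₀ : ℝ) (aa : Fin (n + 1) → ℝ) : Prop :=
  ∃ C R₀ : ℝ, 0 < R₀ ∧ ∀ x : EuclideanSpace ℝ (Fin (n + 1)), R₀ ≤ ‖x‖ →
    |f x - ‖x‖ ^ (-l) * (a₀ + ∑ i, aa i * x i / ‖x‖ ^ 2)| ≤ C * ‖x‖ ^ (-l - 2) ∧
    (∀ i : Fin (n + 1),
      |pderiv' i f x + l * a₀ * x i * ‖x‖ ^ (-l - 2)| ≤ C * ‖x‖ ^ (-l - 2)) ∧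
    (∀ i j : Fin (n + 1), |pderiv' i (pderiv' j f) x| ≤ C * ‖x‖ ^ (-l - 2))

/-- The reflection `x^λ = (2λ − x₁, x₂, …, x_{n+1})` across the hyperplane `{x₁ = λ}`. -/
noncomputable def reflHyp (n : ℕ) (lam : ℝ) (x : EuclideanSpace ℝ (Fin (n + 1))) :
    EuclideanSpace ℝ (Fin (n + 1)) :=
  WithLp.toLp 2 (Function.update x 0 (2 * lam - x 0))

/-!
Where `x₁ ≥ λ/2`, the expansion of `∂₁f` gives `∂₁f(y) ≤ (C - l a₀ y₁)|y|^{-l-2} < 0` on the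
whole segment from `x` to `x^λ` once `λ` is large, so `f` decreases along it. Where `x₁ < λ/2`,
the reflection pushes `x` outwards, `|x^λ|² - |x|² = 4λ(λ - x₁) ≥ 2λ²`, and by Bernoulli's
inequality the leading term `a₀|x|^{-l}` drops by at least
`a₀ min(1, l/2) (1 - |x|²/|x^λ|²) |x|^{-l}`; for `|x|` and `λ` large this beats both the change of
the first-order term and the `O(|x|^{-l-2})` errors.
-/

open Real Set

lemma min_one_mul_one_sub_le_one_sub_rpow {u q : ℝ} (hu₀ : 0 ≤ u) (hu₁ : u ≤ 1) (hq : 0 < q) :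
    min 1 q * (1 - u) ≤ 1 - u ^ q := by
  rcases le_or_gt q 1 with hq₁ | hq₁
  · have hbern := rpow_one_add_le_one_add_mul_self (s := u - 1) (by linarith) hq.le hq₁
    rw [add_sub_cancel] at hbern
    rw [min_eq_right hq₁]
    linarith
  · rw [min_eq_left hq₁.le]
    linarith [rpow_le_self_of_le_one hu₀ hu₁ hq₁.le]

lemma le_rpow_neg_sub_rpow_neg {a b l : ℝ} (ha : 0 < a) (hab : a ≤ b) (hl : 0 < l) :
    min 1 (l / 2) * ((b ^ 2 - a ^ 2) / b ^ 2) * a ^ (-l) ≤ a ^ (-l) - b ^ (-l) := by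
  have hb : 0 < b := ha.trans_le hab
  have hu : (a ^ 2 / b ^ 2) ^ (l / 2) * a ^ (-l) = b ^ (-l) := by
    rw [← div_pow, ← rpow_natCast, ← rpow_mul (by positivity),
      show ((2 : ℕ) : ℝ) * (l / 2) = l by push_cast; ring, div_rpow ha.le hb.le,
      rpow_neg ha.le, rpow_neg hb.le]
    field_simp
  have key := min_one_mul_one_sub_le_one_sub_rpow (q := l / 2) (by positivity)
    (div_le_one_of_le₀ (pow_le_pow_left₀ ha.le hab 2) (by positivity)) (by positivity)
  rw [one_sub_div (by positivity)] at key
  calc min 1 (l / 2) * ((b ^ 2 - a ^ 2) / b ^ 2) * a ^ (-l)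
      ≤ (1 - (a ^ 2 / b ^ 2) ^ (l / 2)) * a ^ (-l) :=
        mul_le_mul_of_nonneg_right key (rpow_nonneg ha.le _)
    _ = a ^ (-l) - b ^ (-l) := by rw [sub_mul, one_mul, hu]

lemma rpow_neg_sub_two {a : ℝ} (ha : 0 < a) (l : ℝ) : a ^ (-l - 2) = a ^ (-l) / a ^ 2 := by
  rw [sub_eq_add_neg, rpow_add ha, rpow_neg ha.le 2, rpow_two, div_eq_mul_inv]

lemma mul_rpow_neg_sub_two_add_le {a b l C k : ℝ} (ha : 0 < a) (hab : a ≤ b) (hl : -2 ≤ l)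
    (hC : 0 ≤ C) (hC₁ : 32 * C ≤ k * a ^ 2) (hC₂ : 32 * C ≤ k * (b ^ 2 - a ^ 2)) :
    C * (a ^ (-l - 2) + b ^ (-l - 2)) ≤ k / 8 * ((b ^ 2 - a ^ 2) / b ^ 2) * a ^ (-l) := by
  have hb : 0 < b := ha.trans_le hab
  have hd : 0 ≤ b ^ 2 - a ^ 2 := sub_nonneg.2 (pow_le_pow_left₀ ha.le hab 2)
  have hP : b ^ (-l - 2) ≤ a ^ (-l - 2) := rpow_le_rpow_of_nonpos ha hab (by linarith)
  have hCk : 2 * C / a ^ 2 ≤ k / 8 * ((b ^ 2 - a ^ 2) / b ^ 2) := by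
    have : 16 * C * b ^ 2 ≤ k * (b ^ 2 - a ^ 2) * a ^ 2 := by
      nlinarith [mul_le_mul_of_nonneg_right hC₂ (sq_nonneg a), mul_le_mul_of_nonneg_right hC₁ hd]
    rw [div_le_iff₀ (by positivity), show k / 8 * ((b ^ 2 - a ^ 2) / b ^ 2) * a ^ 2
      = k * (b ^ 2 - a ^ 2) * a ^ 2 / (8 * b ^ 2) by ring, le_div_iff₀ (by positivity)]
    linarith
  calc C * (a ^ (-l - 2) + b ^ (-l - 2)) ≤ C * (2 * a ^ (-l - 2)) :=
        mul_le_mul_of_nonneg_left (by linarith) hC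
    _ = 2 * C / a ^ 2 * a ^ (-l) := by rw [rpow_neg_sub_two ha]; ring
    _ ≤ k / 8 * ((b ^ 2 - a ^ 2) / b ^ 2) * a ^ (-l) :=
        mul_le_mul_of_nonneg_right hCk (rpow_nonneg ha.le _)

lemma apply_add_smul_lt_of_fderiv_neg {E : Type*} [NormedAddCommGroup E] [NormedSpace ℝ E]
    {f : E → ℝ} {x e : E} {T : ℝ} (hT : 0 < T)
    (hf : ∀ t ∈ Icc 0 T, DifferentiableAt ℝ f (x + t • e))
    (hneg : ∀ t ∈ Ioo 0 T, fderiv ℝ f (x + t • e) e < 0) : f (x + T • e) < f x := by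
  have hderiv : ∀ t ∈ Icc 0 T,
      HasDerivAt (fun s : ℝ => f (x + s • e)) (fderiv ℝ f (x + t • e) e) t := fun t ht => by
    have hline : HasDerivAt (fun s : ℝ => x + s • e) e t := by
      simpa using ((hasDerivAt_id t).smul_const e).const_add x
    exact (hf t ht).hasFDerivAt.comp_hasDerivAt t hline
  have hanti : StrictAntiOn (fun s : ℝ => f (x + s • e)) (Icc 0 T) := by
    refine strictAntiOn_of_deriv_neg (convex_Icc 0 T)
      (fun t ht => (hderiv t ht).continuousAt.continuousWithinAt) fun t ht => ?_
    rw [interior_Icc] at ht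
    rw [(hderiv t (Ioo_subset_Icc_self ht)).deriv]
    exact hneg t ht
  simpa using hanti (left_mem_Icc.2 hT.le) (right_mem_Icc.2 hT.le) hT

lemma norm_inv_norm_sq_smul_sub_le {E : Type*} [NormedAddCommGroup E] [NormedSpace ℝ E]
    {x y : E} (hx : 0 < ‖x‖) (hxy : ‖x‖ ≤ ‖y‖) :
    ‖(‖x‖ ^ 2)⁻¹ • x - (‖y‖ ^ 2)⁻¹ • y‖ ≤ ((‖y‖ ^ 2 - ‖x‖ ^ 2) / ‖x‖ + ‖y - x‖) / ‖y‖ ^ 2 := by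
  have hy : 0 < ‖y‖ := hx.trans_le hxy
  have hsplit : (‖x‖ ^ 2)⁻¹ • x - (‖y‖ ^ 2)⁻¹ • y
      = ((‖x‖ ^ 2)⁻¹ - (‖y‖ ^ 2)⁻¹) • x + (‖y‖ ^ 2)⁻¹ • (x - y) := by
    rw [sub_smul, smul_sub]; abel
  have hcoef : 0 ≤ (‖x‖ ^ 2)⁻¹ - (‖y‖ ^ 2)⁻¹ :=
    sub_nonneg.2 (inv_anti₀ (by positivity) (pow_le_pow_left₀ hx.le hxy 2))
  calc ‖(‖x‖ ^ 2)⁻¹ • x - (‖y‖ ^ 2)⁻¹ • y‖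
      ≤ ((‖x‖ ^ 2)⁻¹ - (‖y‖ ^ 2)⁻¹) * ‖x‖ + (‖y‖ ^ 2)⁻¹ * ‖x - y‖ := by
        rw [hsplit]
        refine (norm_add_le _ _).trans_eq ?_
        rw [norm_smul, norm_smul, Real.norm_of_nonneg hcoef, Real.norm_of_nonneg (by positivity)]
    _ = ((‖y‖ ^ 2 - ‖x‖ ^ 2) / ‖x‖ + ‖y - x‖) / ‖y‖ ^ 2 := by
        rw [norm_sub_rev]
        field_simp

section EuclideanSpace

variable {ι : Type*} [Fintype ι]

lemma abs_sum_mul_apply_le (c : ι → ℝ) (v : EuclideanSpace ℝ ι) :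
    |∑ i, c i * v i| ≤ (∑ i, |c i|) * ‖v‖ := by
  rw [Finset.sum_mul]
  refine (Finset.abs_sum_le_sum_abs _ _).trans (Finset.sum_le_sum fun i _ => ?_)
  rw [abs_mul]
  exact mul_le_mul_of_nonneg_left (PiLp.norm_apply_le v i) (abs_nonneg _)

lemma norm_add_smul_single_sq [DecidableEq ι] (x : EuclideanSpace ℝ ι) (i : ι) (t : ℝ) :
    ‖x + t • EuclideanSpace.single i 1‖ ^ 2 = ‖x‖ ^ 2 + 2 * t * x i + t ^ 2 := by
  rw [norm_add_sq_real, inner_smul_right, EuclideanSpace.inner_single_right, norm_smul,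
    PiLp.norm_single]
  simp only [RCLike.conj_to_real, one_mul, norm_eq_abs, norm_one, mul_one, sq_abs]
  ring

lemma sum_mul_apply_div_norm_sq (aa : ι → ℝ) (x : EuclideanSpace ℝ ι) :
    ∑ i, aa i * x i / ‖x‖ ^ 2 = ∑ i, aa i * ((‖x‖ ^ 2)⁻¹ • x) i :=
  Finset.sum_congr rfl fun i _ => by simp only [PiLp.smul_apply, smul_eq_mul]; ring

lemma abs_sum_mul_apply_div_norm_sq_le (aa : ι → ℝ) (x : EuclideanSpace ℝ ι) :
    |∑ i, aa i * x i / ‖x‖ ^ 2| ≤ (∑ i, |aa i|) / ‖x‖ := by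
  rcases (norm_nonneg x).eq_or_lt with hx | hx
  · simp [← hx]
  have h := abs_sum_mul_apply_le aa ((‖x‖ ^ 2)⁻¹ • x)
  rwa [← sum_mul_apply_div_norm_sq, norm_smul, Real.norm_of_nonneg (by positivity),
    show (‖x‖ ^ 2)⁻¹ * ‖x‖ = ‖x‖⁻¹ by field_simp, ← div_eq_mul_inv] at h

lemma abs_sum_mul_apply_div_norm_sq_sub_le (aa : ι → ℝ) {x y : EuclideanSpace ℝ ι}
    (hx : 0 < ‖x‖) (hxy : ‖x‖ ≤ ‖y‖) :
    |∑ i, aa i * x i / ‖x‖ ^ 2 - ∑ i, aa i * y i / ‖y‖ ^ 2|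
      ≤ (∑ i, |aa i|) * (((‖y‖ ^ 2 - ‖x‖ ^ 2) / ‖x‖ + ‖y - x‖) / ‖y‖ ^ 2) := by
  have hv : ∑ i, aa i * x i / ‖x‖ ^ 2 - ∑ i, aa i * y i / ‖y‖ ^ 2
      = ∑ i, aa i * ((‖x‖ ^ 2)⁻¹ • x - (‖y‖ ^ 2)⁻¹ • y) i := by
    simp only [sum_mul_apply_div_norm_sq, PiLp.sub_apply, mul_sub, Finset.sum_sub_distrib]
  rw [hv]
  exact (abs_sum_mul_apply_le aa _).trans (mul_le_mul_of_nonneg_left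
    (norm_inv_norm_sq_smul_sub_le hx hxy) (Finset.sum_nonneg fun i _ => abs_nonneg _))

noncomputable def expansionMain (l a₀ : ℝ) (aa : ι → ℝ) (y : EuclideanSpace ℝ ι) : ℝ :=
  ‖y‖ ^ (-l) * (a₀ + ∑ i, aa i * y i / ‖y‖ ^ 2)

lemma le_expansionMain_sub {l a₀ : ℝ} {aa : ι → ℝ} (hl : 0 < l) (ha₀ : 0 < a₀)
    {x y : EuclideanSpace ℝ ι} (hx : 0 < ‖x‖) (hxy : ‖x‖ ≤ ‖y‖)
    (hA₁ : 8 * ∑ i, |aa i| ≤ a₀ * min 1 (l / 2) * ‖x‖)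
    (hA₂ : 8 * (∑ i, |aa i|) * ‖y - x‖ ≤ a₀ * min 1 (l / 2) * (‖y‖ ^ 2 - ‖x‖ ^ 2)) :
    a₀ * min 1 (l / 2) / 4 * ((‖y‖ ^ 2 - ‖x‖ ^ 2) / ‖y‖ ^ 2) * ‖x‖ ^ (-l)
      ≤ expansionMain l a₀ aa x - expansionMain l a₀ aa y := by
  set A := ∑ i, |aa i|
  set m := min 1 (l / 2)
  set d := ‖y‖ ^ 2 - ‖x‖ ^ 2
  set bx := a₀ + ∑ i, aa i * x i / ‖x‖ ^ 2
  set bxy := ∑ i, aa i * x i / ‖x‖ ^ 2 - ∑ i, aa i * y i / ‖y‖ ^ 2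
  have hm : 0 < m := lt_min one_pos (by positivity)
  have hd : 0 ≤ d := sub_nonneg.2 (pow_le_pow_left₀ hx.le hxy 2)
  have hbx : a₀ / 2 ≤ bx := by
    have hAx : A / ‖x‖ ≤ a₀ / 2 := by
      rw [div_le_iff₀ hx]
      nlinarith [mul_le_mul_of_nonneg_left (min_le_left 1 (l / 2)) (mul_pos ha₀ hx).le]
    linarith [(abs_le.1 (abs_sum_mul_apply_div_norm_sq_le aa x)).1]
  have hbxy : |bxy| ≤ a₀ * m / 4 * (d / ‖y‖ ^ 2) := by
    have hAd : A * d / ‖x‖ ≤ a₀ * m * d / 8 := by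
      rw [div_le_iff₀ hx]
      nlinarith [mul_le_mul_of_nonneg_right hA₁ hd]
    calc |bxy| ≤ A * ((d / ‖x‖ + ‖y - x‖) / ‖y‖ ^ 2) :=
          abs_sum_mul_apply_div_norm_sq_sub_le aa hx hxy
      _ = (A * d / ‖x‖ + A * ‖y - x‖) / ‖y‖ ^ 2 := by ring
      _ ≤ (a₀ * m * d / 8 + a₀ * m * d / 8) / ‖y‖ ^ 2 := by gcongr; linarith
      _ = a₀ * m / 4 * (d / ‖y‖ ^ 2) := by ring
  have hL : m * (d / ‖y‖ ^ 2) * ‖x‖ ^ (-l) ≤ ‖x‖ ^ (-l) - ‖y‖ ^ (-l) :=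
    le_rpow_neg_sub_rpow_neg hx hxy hl
  have hL' : ‖y‖ ^ (-l) ≤ ‖x‖ ^ (-l) := rpow_le_rpow_of_nonpos hx hxy (by linarith)
  have hL'0 : 0 ≤ ‖y‖ ^ (-l) := rpow_nonneg (norm_nonneg y) _
  have hsplit : expansionMain l a₀ aa x - expansionMain l a₀ aa y
      = bx * (‖x‖ ^ (-l) - ‖y‖ ^ (-l)) + bxy * ‖y‖ ^ (-l) := by
    simp only [expansionMain, bx, bxy]; ring
  have hmain : a₀ / 2 * (m * (d / ‖y‖ ^ 2) * ‖x‖ ^ (-l)) ≤ bx * (‖x‖ ^ (-l) - ‖y‖ ^ (-l)) :=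
    mul_le_mul hbx hL (by positivity) (by linarith)
  have hcross : -(a₀ * m / 4 * (d / ‖y‖ ^ 2) * ‖x‖ ^ (-l)) ≤ bxy * ‖y‖ ^ (-l) := by
    calc -(a₀ * m / 4 * (d / ‖y‖ ^ 2) * ‖x‖ ^ (-l)) ≤ -(|bxy| * ‖y‖ ^ (-l)) :=
          neg_le_neg (mul_le_mul hbxy hL' hL'0 (by positivity))
      _ ≤ bxy * ‖y‖ ^ (-l) := by
          rw [← neg_mul]; exact mul_le_mul_of_nonneg_right (neg_abs_le _) hL'0
  linarith

lemma apply_lt_of_expansion_bound {l a₀ C R₀ : ℝ} {aa : ι → ℝ} (hl : 0 < l) (ha₀ : 0 < a₀)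
    {f : EuclideanSpace ℝ ι → ℝ}
    (hexp : ∀ y : EuclideanSpace ℝ ι, R₀ ≤ ‖y‖ →
      |f y - expansionMain l a₀ aa y| ≤ C * ‖y‖ ^ (-l - 2))
    {x y : EuclideanSpace ℝ ι} (hxR₀ : R₀ ≤ ‖x‖) (hx : 0 < ‖x‖) (hxy : ‖x‖ < ‖y‖)
    (hA₁ : 8 * ∑ i, |aa i| ≤ a₀ * min 1 (l / 2) * ‖x‖)
    (hA₂ : 8 * (∑ i, |aa i|) * ‖y - x‖ ≤ a₀ * min 1 (l / 2) * (‖y‖ ^ 2 - ‖x‖ ^ 2))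
    (hC₁ : 32 * C ≤ a₀ * min 1 (l / 2) * ‖x‖ ^ 2)
    (hC₂ : 32 * C ≤ a₀ * min 1 (l / 2) * (‖y‖ ^ 2 - ‖x‖ ^ 2)) :
    f y < f x := by
  have hC : 0 ≤ C := le_of_mul_le_mul_right
    (by rw [zero_mul]; exact (abs_nonneg _).trans (hexp x hxR₀)) (rpow_pos_of_pos hx _)
  have hmain := le_expansionMain_sub hl ha₀ hx hxy.le hA₁ hA₂
  have herr := mul_rpow_neg_sub_two_add_le (l := l) hx hxy.le (by linarith) hC hC₁ hC₂
  have hpos : 0 < a₀ * min 1 (l / 2) / 8 * ((‖y‖ ^ 2 - ‖x‖ ^ 2) / ‖y‖ ^ 2) * ‖x‖ ^ (-l) := by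
    have hm : 0 < a₀ * min 1 (l / 2) / 8 :=
      div_pos (mul_pos ha₀ (lt_min one_pos (half_pos hl))) (by norm_num)
    have hW : 0 < (‖y‖ ^ 2 - ‖x‖ ^ 2) / ‖y‖ ^ 2 :=
      div_pos (by nlinarith) (pow_pos (hx.trans hxy) 2)
    exact mul_pos (mul_pos hm hW) (rpow_pos_of_pos hx _)
  linarith [(abs_le.1 (hexp x hxR₀)).1, (abs_le.1 (hexp y (hxR₀.trans hxy.le))).2]

end EuclideanSpace

lemma reflHyp_eq_add_smul (n : ℕ) (lam : ℝ) (x : EuclideanSpace ℝ (Fin (n + 1))) :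
    reflHyp n lam x = x + (2 * (lam - x 0)) • EuclideanSpace.single 0 1 := by
  ext i
  rcases eq_or_ne i 0 with rfl | hi
  · simp only [reflHyp, update_self, PiLp.add_apply, PiLp.smul_apply, PiLp.single_eq_same,
      smul_eq_mul, mul_one]
    ring
  · simp [reflHyp, hi]

lemma norm_reflHyp_sq (n : ℕ) (lam : ℝ) (x : EuclideanSpace ℝ (Fin (n + 1))) :
    ‖reflHyp n lam x‖ ^ 2 = ‖x‖ ^ 2 + 4 * lam * (lam - x 0) := by
  rw [reflHyp_eq_add_smul, norm_add_smul_single_sq]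
  ring

lemma norm_reflHyp_sub (n : ℕ) {lam : ℝ} {x : EuclideanSpace ℝ (Fin (n + 1))} (hx : x 0 ≤ lam) :
    ‖reflHyp n lam x - x‖ = 2 * (lam - x 0) := by
  rw [reflHyp_eq_add_smul, add_sub_cancel_left, norm_smul, PiLp.norm_single,
    norm_one, mul_one, Real.norm_of_nonneg (by linarith)]

lemma apply_reflHyp_lt_of_pderiv_neg {n : ℕ} {f : EuclideanSpace ℝ (Fin (n + 1)) → ℝ} {lam : ℝ}
    {x : EuclideanSpace ℝ (Fin (n + 1))} (hx₀ : 0 ≤ x 0) (hx : x 0 < lam)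
    (hf : ∀ y : EuclideanSpace ℝ (Fin (n + 1)), ‖x‖ ≤ ‖y‖ → x 0 ≤ y 0 →
      DifferentiableAt ℝ f y ∧ pderiv' 0 f y < 0) :
    f (reflHyp n lam x) < f x := by
  set e := EuclideanSpace.single (0 : Fin (n + 1)) (1 : ℝ)
  have hseg : ∀ t : ℝ, 0 ≤ t → ‖x‖ ≤ ‖x + t • e‖ ∧ x 0 ≤ (x + t • e) 0 := fun t ht => by
    refine ⟨le_of_pow_le_pow_left₀ two_ne_zero (norm_nonneg _) ?_, by simpa [e] using ht⟩
    rw [norm_add_smul_single_sq]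
    nlinarith
  rw [reflHyp_eq_add_smul]
  exact apply_add_smul_lt_of_fderiv_neg (by linarith)
    (fun t ht => (hf _ (hseg t ht.1).1 (hseg t ht.1).2).1)
    fun t ht => (hf _ (hseg t ht.1.le).1 (hseg t ht.1.le).2).2

lemma apply_reflHyp_lt_of_pderiv_bound {n : ℕ} {f : EuclideanSpace ℝ (Fin (n + 1)) → ℝ}
    {l a₀ C R₀ R₁ lam : ℝ} (hla : 0 < l * a₀)
    (hreg : ContDiffOn ℝ 2 f {y : EuclideanSpace ℝ (Fin (n + 1)) | R₁ < ‖y‖})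
    (hderiv : ∀ y : EuclideanSpace ℝ (Fin (n + 1)), R₀ ≤ ‖y‖ →
      |pderiv' 0 f y + l * a₀ * y 0 * ‖y‖ ^ (-l - 2)| ≤ C * ‖y‖ ^ (-l - 2))
    {x : EuclideanSpace ℝ (Fin (n + 1))} (hxR₀ : R₀ ≤ ‖x‖) (hxR₁ : R₁ < ‖x‖) (hx₀ : 0 < x 0)
    (hC : C < l * a₀ * x 0) (hx : x 0 < lam) :
    f (reflHyp n lam x) < f x := by
  have hxpos : 0 < ‖x‖ := hx₀.trans_le ((le_abs_self _).trans (PiLp.norm_apply_le x 0))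
  refine apply_reflHyp_lt_of_pderiv_neg hx₀.le hx fun y hy hy₀ => ⟨?_, ?_⟩
  · have hyU : {y : EuclideanSpace ℝ (Fin (n + 1)) | R₁ < ‖y‖} ∈ 𝓝 y :=
      (isOpen_lt continuous_const continuous_norm).mem_nhds (hxR₁.trans_le hy)
    exact (hreg.contDiffAt hyU).differentiableAt (by norm_num)
  · have hP : 0 < ‖y‖ ^ (-l - 2) := rpow_pos_of_pos (hxpos.trans_le hy) _
    have hCy : C < l * a₀ * y 0 := hC.trans_le (mul_le_mul_of_nonneg_left hy₀ hla.le)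
    nlinarith [(abs_le.1 (hderiv y (hxR₀.trans hy))).2]

lemma apply_reflHyp_lt_of_expansion_bound {n : ℕ} {f : EuclideanSpace ℝ (Fin (n + 1)) → ℝ}
    {l a₀ C R₀ lam : ℝ} {aa : Fin (n + 1) → ℝ} (hl : 0 < l) (ha₀ : 0 < a₀)
    (hexp : ∀ y : EuclideanSpace ℝ (Fin (n + 1)), R₀ ≤ ‖y‖ →
      |f y - expansionMain l a₀ aa y| ≤ C * ‖y‖ ^ (-l - 2))
    {x : EuclideanSpace ℝ (Fin (n + 1))} (hxR₀ : R₀ ≤ ‖x‖) (hx : 0 < ‖x‖) (hlam : 0 < lam)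
    (hxlam : 2 * x 0 < lam)
    (hA₁ : 8 * ∑ i, |aa i| ≤ a₀ * min 1 (l / 2) * ‖x‖)
    (hA₂ : 4 * ∑ i, |aa i| ≤ a₀ * min 1 (l / 2) * lam)
    (hC₁ : 32 * C ≤ a₀ * min 1 (l / 2) * ‖x‖ ^ 2)
    (hC₂ : 16 * C ≤ a₀ * min 1 (l / 2) * lam ^ 2) :
    f (reflHyp n lam x) < f x := by
  have hs : lam / 2 < lam - x 0 := by linarith
  have hm : 0 < a₀ * min 1 (l / 2) := mul_pos ha₀ (lt_min one_pos (by positivity))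
  have hd : ‖reflHyp n lam x‖ ^ 2 - ‖x‖ ^ 2 = 4 * lam * (lam - x 0) := by
    rw [norm_reflHyp_sq]; ring
  refine apply_lt_of_expansion_bound hl ha₀ hexp hxR₀ hx ?_ hA₁ ?_ hC₁ ?_
  · exact lt_of_pow_lt_pow_left₀ 2 (norm_nonneg _) (by nlinarith)
  · rw [norm_reflHyp_sub n (by linarith), hd]
    nlinarith
  · have hsq : 2 * lam ^ 2 ≤ 4 * lam * (lam - x 0) := by nlinarith
    rw [hd]
    nlinarith [mul_le_mul_of_nonneg_left hsq hm.le]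

theorem stmt_13_general (n : ℕ) (l : ℝ) (hl : 0 < l)
    (f : EuclideanSpace ℝ (Fin (n + 1)) → ℝ) (R₁ : ℝ)
    (hreg : ContDiffOn ℝ 2 f {x : EuclideanSpace ℝ (Fin (n + 1)) | R₁ < ‖x‖})
    (a₀ : ℝ) (ha₀ : 0 < a₀) (aa : Fin (n + 1) → ℝ)
    (hexp : HarmonicExpansion n l f a₀ aa) :
    ∃ lam₀ > (0 : ℝ), ∃ R > (0 : ℝ), ∀ lam ≥ lam₀,
      ∀ x : EuclideanSpace ℝ (Fin (n + 1)), x 0 < lam → R ≤ ‖x‖ →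
        f (reflHyp n lam x) < f x := by
  obtain ⟨C, R₀, -, hbound⟩ := hexp
  set A := ∑ i, |aa i|
  have hla : 0 < l * a₀ := mul_pos hl ha₀
  have hm : 0 < a₀ * min 1 (l / 2) := mul_pos ha₀ (lt_min one_pos (by positivity))
  have hlin : ∀ k > (0 : ℝ), ∀ c : ℝ, ∀ᶠ r in atTop, c < k * r := fun k hk c =>
    (tendsto_id.const_mul_atTop hk).eventually_gt_atTop c
  have hsq : ∀ k > (0 : ℝ), ∀ c : ℝ, ∀ᶠ r in atTop, c < k * r ^ 2 := fun k hk c =>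
    ((tendsto_pow_atTop two_ne_zero).const_mul_atTop hk).eventually_gt_atTop c
  obtain ⟨lam₀, hlam₀⟩ := eventually_atTop.1 <| (eventually_gt_atTop 0).and <|
    (hlin _ hla (2 * C)).and <| (hlin _ hm (4 * A)).and (hsq _ hm (16 * C))
  obtain ⟨R, hR⟩ := eventually_atTop.1 <| (eventually_gt_atTop 0).and <|
    (eventually_ge_atTop R₀).and <| (eventually_gt_atTop R₁).and <|
    (hlin _ hm (8 * A)).and (hsq _ hm (32 * C))
  refine ⟨lam₀, (hlam₀ lam₀ le_rfl).1, R, (hR R le_rfl).1, fun lam hlam x hx hxR => ?_⟩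
  obtain ⟨hlam0, hlamC₁, hlamA, hlamC₂⟩ := hlam₀ lam hlam
  obtain ⟨hxpos, hxR₀, hxR₁, hxA, hxC⟩ := hR ‖x‖ hxR
  rcases lt_or_ge (2 * x 0) lam with hcase | hcase
  · exact apply_reflHyp_lt_of_expansion_bound hl ha₀ (fun y hy => (hbound y hy).1) hxR₀ hxpos
      hlam0 hcase hxA.le hlamA.le hxC.le hlamC₂.le
  · exact apply_reflHyp_lt_of_pderiv_bound hla hreg (fun y hy => (hbound y hy).2.1 0) hxR₀ hxR₁
      (by linarith) (by nlinarith [mul_le_mul_of_nonneg_left hcase hla.le]) hx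

theorem stmt_13 (n : ℕ) (hn : 1 ≤ n) (l : ℝ) (hl : 0 < l)
    (f : EuclideanSpace ℝ (Fin (n + 1)) → ℝ) (R₁ : ℝ)
    (hreg : ContDiffOn ℝ 2 f {x : EuclideanSpace ℝ (Fin (n + 1)) | R₁ < ‖x‖})
    (a₀ : ℝ) (ha₀ : 0 < a₀) (aa : Fin (n + 1) → ℝ)
    (hexp : HarmonicExpansion n l f a₀ aa) :
    ∃ lam₀ > (0 : ℝ), ∃ R > (0 : ℝ), ∀ lam ≥ lam₀,
      ∀ x : EuclideanSpace ℝ (Fin (n + 1)), x 0 < lam → R ≤ ‖x‖ →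
        f (reflHyp n lam x) < f x :=
  stmt_13_general n l hl f R₁ hreg a₀ ha₀ aa hexp
end

section
/- Let n ≥ 1 be an integer and a a real constant. Let h be a homogeneous polynomial of degree k on ℝ^{n+1}, even with respect to x_{n+1}, satisfying Δ̃_{n+1,a} h = 0. Then for every real t and every positive integer m, on ℝ^{n+1} \ {0}: (Δ̃_{n+1,a})^m ( |x|^{t} h(x/|x|) ) = A_{m,t} |x|^{t−2m} h(x/|x|), where A_{m,t} = ∏_{j=0}^{m−1} [ (t−2j)(t−2j+n+2a−2) − k(k+n+2a−2) ]; moreover (Δ̃_{n+1,a})^m ( |x|^{2m−n−2a−t} h(x/|x|) ) = A_{m,t} |x|^{−n−2a−t} h(x/|x|), i.e. the constant B_{m,t} = ∏_{j=0}^{m−1} [ (2m−n−2a−t−2j)(2m−t−2j−2) − k(k+n+2a−2) ] equals A_{m,t}. -/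
open MeasureTheory Metric Filter Function Topology

/-! The function `‖x‖ ^ c * Q x`, for `Q` homogeneous of degree `k`, satisfies on `x ≠ 0`
`Δ̃ (‖x‖ ^ c * Q) = ‖x‖ ^ c * Δ̃ Q + c (c + 2k + n + 2a − 2) ‖x‖ ^ (c − 2) * Q`:
the Laplacian part is the classical computation using Euler's identity `∑ xᵢ ∂ᵢQ = k Q`, and the
weight term `((2a−1)/x_{n+1}) ∂_{n+1}` (or `(2a−1) ∂²_{n+1}` on `x_{n+1} = 0`) contributes
`(2a−1) c ‖x‖ ^ (c − 2) Q` plus `‖x‖ ^ c` times the corresponding term for `Q`.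
For `Δ̃`-harmonic `h` the class `‖x‖ ^ c * h` is therefore stable under `Δ̃`, and iterating
multiplies by `∏ (c − 2j)(c − 2j + 2k + n + 2a − 2)`. Since `‖x‖ ^ t h(x/‖x‖) = ‖x‖ ^ (t−k) h(x)`,
taking `c = t − k` turns each factor into `(t − 2j)(t − 2j + n + 2a − 2) − k(k + n + 2a − 2)`.
Finally `B_{m,t} = A_{m,t}` because the substitution `j ↦ m − 1 − j` maps the factors of one
product onto those of the other. -/

open MvPolynomial

namespace MvPolynomial

variable {σ R : Type*} [CommSemiring R] {φ : MvPolynomial σ R} {k : ℕ}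

theorem IsHomogeneous.eval_smul (hφ : φ.IsHomogeneous k) (c : R) (x : σ → R) :
    eval (c • x) φ = c ^ k * eval x φ := by
  rw [eval_eq, eval_eq, Finset.mul_sum]
  refine Finset.sum_congr rfl fun d hd => ?_
  have hdeg : ∑ i ∈ d.support, d i = k := by
    rw [← hφ (mem_support_iff.mp hd), Finsupp.weight_apply, Finsupp.sum]
    simp
  simp only [Pi.smul_apply, smul_eq_mul, mul_pow, Finset.prod_mul_distrib,
    Finset.prod_pow_eq_pow_sum, hdeg]
  ring

theorem IsHomogeneous.sum_mul_eval_pderiv [Fintype σ] (hφ : φ.IsHomogeneous k) (x : σ → R) :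
    ∑ i, x i * eval x (pderiv i φ) = k * eval x φ := by
  simpa using congrArg (eval x) hφ.sum_X_mul_pderiv

end MvPolynomial

theorem hasFDerivAt_norm_rpow_of_ne_zero {E : Type*} [NormedAddCommGroup E]
    [InnerProductSpace ℝ E] (c : ℝ) {x : E} (hx : x ≠ 0) :
    HasFDerivAt (fun y : E => ‖y‖ ^ c) ((c * ‖x‖ ^ (c - 2)) • innerSL ℝ x) x := by
  have hsq : (fun y : E => ‖y‖ ^ c) = fun y => (‖y‖ ^ 2) ^ (c / 2) := by
    ext y
    rw [← Real.rpow_natCast, ← Real.rpow_mul (norm_nonneg y)]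
    ring_nf
  have hpow : (‖x‖ ^ 2) ^ (c / 2 - 1) = ‖x‖ ^ (c - 2) := by
    rw [← Real.rpow_natCast, ← Real.rpow_mul (norm_nonneg x)]
    ring_nf
  rw [hsq]
  refine ((hasStrictFDerivAt_norm_sq x).hasFDerivAt.rpow_const
    (Or.inl (by positivity))).congr_fderiv ?_
  ext v
  simp only [hpow, smul_apply, innerSL_apply_apply, smul_eq_mul, nsmul_eq_mul]
  ring

section PolynomialFunction

variable {ι : Type*} [Fintype ι]

noncomputable def polyFun (Q : MvPolynomial ι ℝ) (y : EuclideanSpace ℝ ι) : ℝ :=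
  eval (fun i => y i) Q

theorem hasFDerivAt_polyFun (Q : MvPolynomial ι ℝ) (x : EuclideanSpace ℝ ι) :
    HasFDerivAt (polyFun Q)
      (∑ i, polyFun (pderiv i Q) x • EuclideanSpace.proj (𝕜 := ℝ) i) x := by
  induction Q using MvPolynomial.induction_on with
  | C r =>
    have hC : polyFun (C r : MvPolynomial ι ℝ) = fun _ => r := by
      ext y; simp [polyFun]
    simpa [hC, polyFun] using hasFDerivAt_const (𝕜 := ℝ) r x
  | add p q hp hq =>
    have hpq : polyFun (p + q) = fun y => polyFun p y + polyFun q y := by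
      ext y; simp [polyFun]
    rw [hpq]
    refine (hp.add hq).congr_fderiv ?_
    ext v
    simp [polyFun, add_mul, Finset.sum_add_distrib]
  | mul_X p i hp =>
    have hpX : polyFun (p * X i) = fun y => polyFun p y * y i := by
      ext y; simp [polyFun]
    rw [hpX]
    refine (hp.mul (EuclideanSpace.proj (𝕜 := ℝ) i).hasFDerivAt).congr_fderiv ?_
    ext v
    classical
    simp only [polyFun, PiLp.proj_apply, add_apply, smul_apply, smul_eq_mul, sum_apply,
      Finset.mul_sum, Derivation.leibniz, pderiv_X, Pi.single_apply, apply_ite, mul_one, mul_zero,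
      map_add, map_zero, map_mul, eval_X, add_mul, ite_mul, zero_mul, Finset.sum_add_distrib,
      Finset.sum_ite_eq, Finset.mem_univ, ↓reduceIte, mul_assoc]

noncomputable def normPowMul (c : ℝ) (Q : MvPolynomial ι ℝ) (y : EuclideanSpace ℝ ι) : ℝ :=
  ‖y‖ ^ c * polyFun Q y

theorem differentiableAt_normPowMul (c : ℝ) (Q : MvPolynomial ι ℝ) {x : EuclideanSpace ℝ ι}
    (hx : x ≠ 0) : DifferentiableAt ℝ (normPowMul c Q) x :=
  ((hasFDerivAt_norm_rpow_of_ne_zero c hx).mul (hasFDerivAt_polyFun Q x)).differentiableAt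

theorem rpow_mul_eval_div_norm_eq_normPowMul {Q : MvPolynomial ι ℝ} {k : ℕ}
    (hQ : Q.IsHomogeneous k) (t : ℝ) {y : EuclideanSpace ℝ ι} (hy : y ≠ 0) :
    ‖y‖ ^ t * eval (fun i => y i / ‖y‖) Q = normPowMul (t - k) Q y := by
  have hscale : (fun i => y i / ‖y‖) = ‖y‖⁻¹ • fun i => y i := by
    ext i; simp [div_eq_inv_mul]
  have hnorm : 0 < ‖y‖ := norm_pos_iff.mpr hy
  rw [hscale, hQ.eval_smul, normPowMul, polyFun, Real.rpow_sub hnorm, Real.rpow_natCast, inv_pow]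
  field_simp

end PolynomialFunction

section PartialDerivatives

variable {M : ℕ}

theorem pderiv'_eq_of_hasFDerivAt {f : EuclideanSpace ℝ (Fin M) → ℝ}
    {f' : EuclideanSpace ℝ (Fin M) →L[ℝ] ℝ} {x : EuclideanSpace ℝ (Fin M)}
    (hf : HasFDerivAt f f' x) (i : Fin M) : pderiv' i f x = f' (EuclideanSpace.single i 1) := by
  rw [pderiv', hf.fderiv]

theorem Filter.EventuallyEq.pderiv' {f g : EuclideanSpace ℝ (Fin M) → ℝ}
    {x : EuclideanSpace ℝ (Fin M)} (h : f =ᶠ[𝓝 x] g) (i : Fin M) :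
    _root_.pderiv' i f =ᶠ[𝓝 x] _root_.pderiv' i g := by
  filter_upwards [h.eventuallyEq_nhds] with y hy
  rw [_root_.pderiv', _root_.pderiv', hy.fderiv_eq]

theorem pderiv'_const_mul (A : ℝ) (f : EuclideanSpace ℝ (Fin M) → ℝ) (i : Fin M) :
    pderiv' i (fun y => A * f y) = fun x => A * pderiv' i f x := by
  ext x
  change fderiv ℝ (A • f) x _ = _
  rw [fderiv_const_smul_field]
  rfl

theorem pderiv'_polyFun (Q : MvPolynomial (Fin M) ℝ) (i : Fin M) :
    pderiv' i (polyFun Q) = polyFun (pderiv i Q) := by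
  ext x
  simp [pderiv'_eq_of_hasFDerivAt (hasFDerivAt_polyFun Q x)]

theorem pderiv'_normPowMul (c : ℝ) (Q : MvPolynomial (Fin M) ℝ) {x : EuclideanSpace ℝ (Fin M)}
    (hx : x ≠ 0) (i : Fin M) :
    pderiv' i (normPowMul c Q) x =
      c * normPowMul (c - 2) (X i * Q) x + normPowMul c (pderiv i Q) x := by
  rw [pderiv'_eq_of_hasFDerivAt (f := normPowMul c Q)
    ((hasFDerivAt_norm_rpow_of_ne_zero c hx).mul (hasFDerivAt_polyFun Q x))]
  simp only [polyFun, add_apply, smul_apply, sum_apply, PiLp.proj_apply, PiLp.single_apply,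
    smul_eq_mul, mul_ite, mul_one, mul_zero, Finset.sum_ite_eq', Finset.mem_univ, ↓reduceIte,
    coe_innerSL_apply, EuclideanSpace.inner_single_right, Real.ringHom_apply, one_mul, normPowMul,
    map_mul, eval_X]
  ring

theorem pderiv'_pderiv'_normPowMul (c : ℝ) (Q : MvPolynomial (Fin M) ℝ)
    {x : EuclideanSpace ℝ (Fin M)} (hx : x ≠ 0) (i : Fin M) :
    pderiv' i (pderiv' i (normPowMul c Q)) x =
      c * (c - 2) * ‖x‖ ^ (c - 4) * x i ^ 2 * polyFun Q x
        + c * ‖x‖ ^ (c - 2) * (polyFun Q x + 2 * (x i * polyFun (pderiv i Q) x))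
        + ‖x‖ ^ c * polyFun (pderiv i (pderiv i Q)) x := by
  have hfirst : pderiv' i (normPowMul c Q) =ᶠ[𝓝 x]
      fun y => c * normPowMul (c - 2) (X i * Q) y + normPowMul c (pderiv i Q) y :=
    eventually_ne_nhds hx |>.mono fun y hy => pderiv'_normPowMul c Q hy i
  rw [pderiv', hfirst.fderiv_eq,
    fderiv_fun_add ((differentiableAt_normPowMul _ _ hx).const_mul c)
      (differentiableAt_normPowMul _ _ hx),
    fderiv_const_mul (differentiableAt_normPowMul _ _ hx)]
  simp only [add_apply, smul_apply, smul_eq_mul]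
  rw [← pderiv', ← pderiv', pderiv'_normPowMul _ _ hx, pderiv'_normPowMul _ _ hx]
  simp only [normPowMul, polyFun, map_mul, eval_X, Derivation.leibniz, smul_eq_mul, pderiv_X,
    Pi.single_eq_same, mul_one, map_add]
  ring_nf

theorem sum_pderiv'_pderiv'_normPowMul (c : ℝ) {Q : MvPolynomial (Fin M) ℝ} {k : ℕ}
    (hQ : Q.IsHomogeneous k) {x : EuclideanSpace ℝ (Fin M)} (hx : x ≠ 0) :
    ∑ i, pderiv' i (pderiv' i (normPowMul c Q)) x =
      ‖x‖ ^ c * ∑ i, polyFun (pderiv i (pderiv i Q)) x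
        + c * (c + 2 * k + M - 2) * normPowMul (c - 2) Q x := by
  have hsq : ‖x‖ ^ (c - 4) * ∑ i, x i ^ 2 = ‖x‖ ^ (c - 2) := by
    rw [← EuclideanSpace.real_norm_sq_eq, ← Real.rpow_add_natCast (norm_ne_zero_iff.mpr hx)]
    ring_nf
  have heuler : ∑ i, x i * polyFun (pderiv i Q) x = k * polyFun Q x :=
    hQ.sum_mul_eval_pderiv _
  simp only [pderiv'_pderiv'_normPowMul c Q hx, Finset.sum_add_distrib, ← Finset.sum_mul,
    ← Finset.mul_sum]
  simp only [Finset.sum_const, Finset.card_univ, Fintype.card_fin, nsmul_eq_mul, heuler, normPowMul]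
  linear_combination c * (c - 2) * polyFun Q x * hsq

end PartialDerivatives

section DeltaTilde

variable {n : ℕ} {a : ℝ}

theorem deltaTilde_eqOn {f g : EuclideanSpace ℝ (Fin (n + 1)) → ℝ}
    {U : Set (EuclideanSpace ℝ (Fin (n + 1)))} (hU : IsOpen U) (hfg : Set.EqOn f g U) :
    Set.EqOn (deltaTilde n a f) (deltaTilde n a g) U := by
  intro x hx
  have h : f =ᶠ[𝓝 x] g := Filter.eventuallyEq_of_mem (hU.mem_nhds hx) hfg
  simp only [deltaTilde, ((h.pderiv' _).pderiv' _).eq_of_nhds, (h.pderiv' _).eq_of_nhds]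

theorem iterate_deltaTilde_eqOn {f g : EuclideanSpace ℝ (Fin (n + 1)) → ℝ}
    {U : Set (EuclideanSpace ℝ (Fin (n + 1)))} (hU : IsOpen U) (hfg : Set.EqOn f g U) (m : ℕ) :
    Set.EqOn ((deltaTilde n a)^[m] f) ((deltaTilde n a)^[m] g) U := by
  induction m with
  | zero => exact hfg
  | succ m ih =>
    simp only [Function.iterate_succ_apply']
    exact deltaTilde_eqOn hU ih

theorem deltaTilde_const_mul (A : ℝ) (f : EuclideanSpace ℝ (Fin (n + 1)) → ℝ) :
    deltaTilde n a (fun y => A * f y) = fun x => A * deltaTilde n a f x := by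
  ext x
  simp only [deltaTilde, pderiv'_const_mul, ← Finset.mul_sum]
  split_ifs <;> ring

theorem deltaTilde_normPowMul (c : ℝ) {Q : MvPolynomial (Fin (n + 1)) ℝ} {k : ℕ}
    (hQ : Q.IsHomogeneous k) {x : EuclideanSpace ℝ (Fin (n + 1))} (hx : x ≠ 0) :
    deltaTilde n a (normPowMul c Q) x =
      ‖x‖ ^ c * deltaTilde n a (polyFun Q) x
        + c * (c + 2 * k + n + 2 * a - 2) * normPowMul (c - 2) Q x := by
  simp only [deltaTilde, sum_pderiv'_pderiv'_normPowMul c hQ hx, pderiv'_polyFun]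
  split_ifs with hL
  · rw [pderiv'_pderiv'_normPowMul c Q hx, hL]
    simp only [normPowMul]
    push_cast
    ring
  · rw [pderiv'_normPowMul c Q hx]
    simp only [normPowMul, polyFun, eval_mul, eval_X]
    push_cast
    field_simp
    ring

theorem iterate_deltaTilde_normPowMul (c : ℝ) {Q : MvPolynomial (Fin (n + 1)) ℝ} {k : ℕ}
    (hQ : Q.IsHomogeneous k) (hharm : ∀ x, x ≠ 0 → deltaTilde n a (polyFun Q) x = 0) (m : ℕ) :
    Set.EqOn ((deltaTilde n a)^[m] (normPowMul c Q))
      (fun x => (∏ j ∈ Finset.range m, (c - 2 * (j : ℝ)) * (c - 2 * (j : ℝ) + 2 * k + n + 2 * a - 2))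
        * normPowMul (c - 2 * m) Q x) {0}ᶜ := by
  induction m with
  | zero => intro x _; simp
  | succ m ih =>
    intro x hx
    rw [Function.iterate_succ_apply', deltaTilde_eqOn isOpen_compl_singleton ih hx,
      deltaTilde_const_mul]
    dsimp only
    rw [deltaTilde_normPowMul _ hQ hx, hharm x hx, Finset.prod_range_succ, Nat.cast_succ,
      show c - 2 * (m : ℝ) - 2 = c - 2 * ((m : ℝ) + 1) by ring]
    ring

theorem iterate_deltaTilde_rpow_mul_eval_div_norm {Q : MvPolynomial (Fin (n + 1)) ℝ} {k : ℕ}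
    (hQ : Q.IsHomogeneous k) (hharm : ∀ x, x ≠ 0 → deltaTilde n a (polyFun Q) x = 0)
    (t : ℝ) (m : ℕ) {x : EuclideanSpace ℝ (Fin (n + 1))} (hx : x ≠ 0) :
    (deltaTilde n a)^[m] (fun y => ‖y‖ ^ t * eval (fun i => y i / ‖y‖) Q) x =
      (∏ j ∈ Finset.range m,
          ((t - 2 * (j : ℝ)) * (t - 2 * (j : ℝ) + n + 2 * a - 2) -
            (k : ℝ) * ((k : ℝ) + n + 2 * a - 2))) *
        (‖x‖ ^ (t - 2 * (m : ℝ)) * eval (fun i => x i / ‖x‖) Q) := by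
  have hradial : Set.EqOn (fun y => ‖y‖ ^ t * eval (fun i => y i / ‖y‖) Q)
      (normPowMul (t - k) Q) {0}ᶜ :=
    fun y hy => rpow_mul_eval_div_norm_eq_normPowMul hQ t hy
  rw [iterate_deltaTilde_eqOn isOpen_compl_singleton hradial m hx,
    iterate_deltaTilde_normPowMul _ hQ hharm m hx,
    rpow_mul_eval_div_norm_eq_normPowMul hQ _ hx]
  dsimp only
  congr 1
  · exact Finset.prod_congr rfl fun j _ => by ring
  · rw [sub_right_comm]

end DeltaTilde

theorem prod_range_indicial_reflect (b a t K : ℝ) (m : ℕ) :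
    ∏ j ∈ Finset.range m,
        ((2 * (m : ℝ) - b - 2 * a - t - 2 * (j : ℝ)) * (2 * (m : ℝ) - t - 2 * (j : ℝ) - 2) - K) =
      ∏ j ∈ Finset.range m, ((t - 2 * (j : ℝ)) * (t - 2 * (j : ℝ) + b + 2 * a - 2) - K) := by
  rw [← Finset.prod_range_reflect]
  refine Finset.prod_congr rfl fun j hj => ?_
  have hjm : j < m := Finset.mem_range.mp hj
  rw [Nat.cast_sub (by omega), Nat.cast_sub (by omega)]
  push_cast
  ring

theorem stmt_18_general (n : ℕ) (a : ℝ) (k : ℕ)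
    (h : MvPolynomial (Fin (n + 1)) ℝ) (hhom : h.IsHomogeneous k)
    (hharm : ∀ x : EuclideanSpace ℝ (Fin (n + 1)),
      deltaTilde n a (fun y => MvPolynomial.eval (fun i => y i) h) x = 0)
    (t : ℝ) (m : ℕ) :
    (∀ x : EuclideanSpace ℝ (Fin (n + 1)), x ≠ 0 →
      (deltaTilde n a)^[m]
          (fun y => ‖y‖ ^ t * MvPolynomial.eval (fun i => y i / ‖y‖) h) x =
        (∏ j ∈ Finset.range m,
            ((t - 2 * (j : ℝ)) * (t - 2 * (j : ℝ) + n + 2 * a - 2) -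
              (k : ℝ) * ((k : ℝ) + n + 2 * a - 2))) *
          (‖x‖ ^ (t - 2 * (m : ℝ)) * MvPolynomial.eval (fun i => x i / ‖x‖) h)) ∧
    (∀ x : EuclideanSpace ℝ (Fin (n + 1)), x ≠ 0 →
      (deltaTilde n a)^[m]
          (fun y => ‖y‖ ^ (2 * (m : ℝ) - n - 2 * a - t) *
            MvPolynomial.eval (fun i => y i / ‖y‖) h) x =
        (∏ j ∈ Finset.range m,
            ((t - 2 * (j : ℝ)) * (t - 2 * (j : ℝ) + n + 2 * a - 2) -
              (k : ℝ) * ((k : ℝ) + n + 2 * a - 2))) *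
          (‖x‖ ^ (-(n : ℝ) - 2 * a - t) * MvPolynomial.eval (fun i => x i / ‖x‖) h)) ∧
    (∏ j ∈ Finset.range m,
        ((2 * (m : ℝ) - n - 2 * a - t - 2 * (j : ℝ)) * (2 * (m : ℝ) - t - 2 * (j : ℝ) - 2) -
          (k : ℝ) * ((k : ℝ) + n + 2 * a - 2))) =
      ∏ j ∈ Finset.range m,
        ((t - 2 * (j : ℝ)) * (t - 2 * (j : ℝ) + n + 2 * a - 2) -
          (k : ℝ) * ((k : ℝ) + n + 2 * a - 2)) := by
  have hA := prod_range_indicial_reflect n a t (k * (k + n + 2 * a - 2)) m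
  refine ⟨fun x hx => iterate_deltaTilde_rpow_mul_eval_div_norm hhom (fun y _ => hharm y) t m hx,
    fun x hx => ?_, hA⟩
  rw [iterate_deltaTilde_rpow_mul_eval_div_norm hhom (fun y _ => hharm y) _ m hx, ← hA]
  congr 1
  · exact Finset.prod_congr rfl fun j _ => by ring
  · rw [show 2 * (m : ℝ) - n - 2 * a - t - 2 * m = -n - 2 * a - t by ring]

theorem stmt_18 (n : ℕ) (hn : 1 ≤ n) (a : ℝ) (k : ℕ)
    (h : MvPolynomial (Fin (n + 1)) ℝ) (hhom : h.IsHomogeneous k)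
    (heven : ∀ x : Fin (n + 1) → ℝ,
      MvPolynomial.eval (Function.update x (Fin.last n) (-x (Fin.last n))) h =
        MvPolynomial.eval x h)
    (hharm : ∀ x : EuclideanSpace ℝ (Fin (n + 1)),
      deltaTilde n a (fun y => MvPolynomial.eval (fun i => y i) h) x = 0)
    (t : ℝ) (m : ℕ) (hm : 1 ≤ m) :
    (∀ x : EuclideanSpace ℝ (Fin (n + 1)), x ≠ 0 →
      (deltaTilde n a)^[m]
          (fun y => ‖y‖ ^ t * MvPolynomial.eval (fun i => y i / ‖y‖) h) x =
        (∏ j ∈ Finset.range m,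
            ((t - 2 * (j : ℝ)) * (t - 2 * (j : ℝ) + n + 2 * a - 2) -
              (k : ℝ) * ((k : ℝ) + n + 2 * a - 2))) *
          (‖x‖ ^ (t - 2 * (m : ℝ)) * MvPolynomial.eval (fun i => x i / ‖x‖) h)) ∧
    (∀ x : EuclideanSpace ℝ (Fin (n + 1)), x ≠ 0 →
      (deltaTilde n a)^[m]
          (fun y => ‖y‖ ^ (2 * (m : ℝ) - n - 2 * a - t) *
            MvPolynomial.eval (fun i => y i / ‖y‖) h) x =
        (∏ j ∈ Finset.range m,
            ((t - 2 * (j : ℝ)) * (t - 2 * (j : ℝ) + n + 2 * a - 2) -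
              (k : ℝ) * ((k : ℝ) + n + 2 * a - 2))) *
          (‖x‖ ^ (-(n : ℝ) - 2 * a - t) * MvPolynomial.eval (fun i => x i / ‖x‖) h)) ∧
    (∏ j ∈ Finset.range m,
        ((2 * (m : ℝ) - n - 2 * a - t - 2 * (j : ℝ)) * (2 * (m : ℝ) - t - 2 * (j : ℝ) - 2) -
          (k : ℝ) * ((k : ℝ) + n + 2 * a - 2))) =
      ∏ j ∈ Finset.range m,
        ((t - 2 * (j : ℝ)) * (t - 2 * (j : ℝ) + n + 2 * a - 2) -
          (k : ℝ) * ((k : ℝ) + n + 2 * a - 2)) :=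
  stmt_18_general n a k h hhom hharm t m
end
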